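/- arXiv:1810.12882 — 3 statements merged into one kernel-verified Lean document; each statement's English description precedes it below -/
import Mathlib

section
/- Let a < b be real numbers, let n be a positive integer, and let q be a real number with n−1 < q < n. Let x : [a,b] → ℝ be n times continuously differentiable. Then for every t ∈ (a,b], the Caputo fractional derivative equals the Riemann–Liouville fractional derivative minus the initial-value correction terms: (1/Γ(n−q)) ∫_a^t (t−τ)^{n−q−1} x^{(n)}(τ) dτ = ⲟD_t^q x(t) − Σ_{k=0}^{n−1} (x^{(k)}(a)/Γ(k−q+1)) (t−a)^{k−q}, where ⲟD_t^q x(t) denotes the n-th derivative, evaluated at t, of the function s ↦ (1/Γ(n−q)) ∫_a^s (s−τ)^{n−q−1} x(τ) dτ. -/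
/-!
Integrating by parts `n` times against the kernel `(t - τ) ^ (v - 1)`, `v = n - q`, gives
`I^v x = ∑_{k<n} x^(k)(a) (t - a)^(v+k) / Γ(v+k+1) + I^(v+n) x^(n)`.
Differentiating `n` times then uses `d/dt I^(p+1) h = I^p h` for continuous `h` and `p > 0`
(Fubini gives `I^(p+1) h = ∫_a^t I^p h`, so this is the fundamental theorem of calculus once
`I^p h` is known to be continuous) and `d/dt (t - a)^r / Γ(r+1) = (t - a)^(r-1) / Γ(r)`.
-/

open MeasureTheory Set Filter Topology intervalIntegral

section IteratedDeriv

variable {𝕜 F : Type*} [NontriviallyNormedField 𝕜] [NormedAddCommGroup F] [NormedSpace 𝕜 F]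

theorem ContDiffOn.hasDerivAt_iteratedDerivWithin {f : 𝕜 → F} {s : Set 𝕜} {n k : ℕ} {y : 𝕜}
    (hf : ContDiffOn 𝕜 n f s) (hs : UniqueDiffOn 𝕜 s) (hk : k < n) (hy : s ∈ 𝓝 y) :
    HasDerivAt (iteratedDerivWithin k f s) (iteratedDerivWithin (k + 1) f s y) y := by
  rw [iteratedDerivWithin_succ, derivWithin_of_mem_nhds hy]
  exact ((hf.differentiableOn_iteratedDerivWithin (by exact_mod_cast hk) hs).differentiableAt
    hy).hasDerivAt

theorem iteratedDerivWithin_eq_of_hasDerivWithinAt {f : ℕ → 𝕜 → F} {s : Set 𝕜} {m : ℕ}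
    (hs : UniqueDiffOn 𝕜 s) (hf : ∀ k < m, ∀ y ∈ s, HasDerivWithinAt (f k) (f (k + 1) y) s y)
    {k : ℕ} (hk : k ≤ m) {y : 𝕜} (hy : y ∈ s) : iteratedDerivWithin k (f 0) s y = f k y := by
  induction k generalizing y with
  | zero => rw [iteratedDerivWithin_zero]
  | succ k ih =>
    rw [iteratedDerivWithin_succ,
      derivWithin_congr (fun z hz => ih (by omega) hz) (ih (by omega) hy)]
    exact (hf k hk y hy).derivWithin (hs y hy)

end IteratedDeriv

theorem ContinuousOn.exists_continuous_eqOn_Icc {α β : Type*} [LinearOrder α] [TopologicalSpace α]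
    [OrderTopology α] [TopologicalSpace β] {a b : α} {g : α → β} (hab : a ≤ b)
    (hg : ContinuousOn g (Icc a b)) : ∃ h : α → β, Continuous h ∧ EqOn h g (Icc a b) :=
  ⟨IccExtend hab ((Icc a b).domRestrict g), hg.domRestrict.Icc_extend',
    fun _ hs => IccExtend_of_mem hab _ hs⟩

theorem intervalIntegrable_sub_rpow {r : ℝ} (hr : -1 < r) (s a b : ℝ) :
    IntervalIntegrable (fun τ => (s - τ) ^ r) volume a b := by
  simpa using (intervalIntegrable_rpow' (a := s - a) (b := s - b) hr).comp_sub_left s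

theorem continuous_intervalIntegral_mul {k : ℝ → ℝ} {g : ℝ → ℝ → ℝ} {c d : ℝ}
    (hk : IntervalIntegrable k volume c d) (hg : Continuous (Function.uncurry g)) :
    Continuous fun s => ∫ w in c..d, k w * g s w := by
  refine continuous_iff_continuousAt.2 fun s₀ => ?_
  obtain ⟨M, hM⟩ := ((isCompact_closedBall s₀ 1).prod isCompact_uIcc).exists_bound_of_continuousOn
    hg.continuousOn
  refine continuousAt_of_dominated_interval (bound := fun w => ‖k w‖ * M)
    (Eventually.of_forall fun s => hk.def'.aestronglyMeasurable.mul
      (hg.comp (Continuous.prodMk_right s)).aestronglyMeasurable) ?_ (hk.norm.mul_const M)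
    (Eventually.of_forall fun w _ => (continuous_const.mul
      (hg.comp (continuous_id.prodMk continuous_const))).continuousAt)
  filter_upwards [Metric.closedBall_mem_nhds s₀ one_pos] with s hs
  refine Eventually.of_forall fun w hw => ?_
  rw [norm_mul]
  exact mul_le_mul_of_nonneg_left (hM (s, w) ⟨hs, uIoc_subset_uIcc hw⟩) (norm_nonneg _)

/-- No condition on `r`: at the poles `r ∈ {0, -1, …}` both sides vanish because Mathlib sets
`Γ = 0` there. -/
theorem hasDerivAt_sub_rpow_div_Gamma {a t : ℝ} (hat : a < t) (r : ℝ) :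
    HasDerivAt (fun s => (s - a) ^ r / Real.Gamma (r + 1))
      ((t - a) ^ (r - 1) / Real.Gamma r) t := by
  refine ((((hasDerivAt_id' t).sub_const a).rpow_const (p := r)
    (Or.inl (sub_pos.2 hat).ne')).div_const (Real.Gamma (r + 1))).congr_deriv ?_
  rcases eq_or_ne r 0 with rfl | hr
  · simp [Real.Gamma_zero]
  · rw [Real.Gamma_add_one hr, one_mul, mul_div_mul_left _ _ hr]

noncomputable def rlIntegral (a p : ℝ) (h : ℝ → ℝ) (s : ℝ) : ℝ :=
  1 / Real.Gamma p * ∫ τ in a..s, (s - τ) ^ (p - 1) * h τ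

theorem rlIntegral_congr {a p s : ℝ} {g h : ℝ → ℝ} (has : a ≤ s) (hgh : EqOn g h (Icc a s)) :
    rlIntegral a p g s = rlIntegral a p h s := by
  rw [rlIntegral, rlIntegral, intervalIntegral.integral_congr fun τ hτ => ?_]
  rw [uIcc_of_le has] at hτ
  simp only [hgh hτ]

theorem integral_sub_rpow_mul_eq_rpow_mul_integral {a s p : ℝ} (hp : 0 < p) (has : a ≤ s)
    (h : ℝ → ℝ) :
    ∫ τ in a..s, (s - τ) ^ (p - 1) * h τ
      = (s - a) ^ p * ∫ w in (0 : ℝ)..1, (1 - w) ^ (p - 1) * h ((s - a) * w + a) := by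
  rcases has.eq_or_lt with rfl | has
  · simp [Real.zero_rpow hp.ne']
  have hsa : s - a ≠ 0 := (sub_pos.2 has).ne'
  have hsub := smul_integral_comp_mul_add (a := 0) (b := 1)
    (f := fun τ => (s - τ) ^ (p - 1) * h τ) (s - a) a
  simp only [mul_zero, zero_add, mul_one, sub_add_cancel, smul_eq_mul] at hsub
  rw [← hsub, intervalIntegral.integral_congr
      (g := fun w => (s - a) ^ (p - 1) * ((1 - w) ^ (p - 1) * h ((s - a) * w + a))) fun w hw => ?_,
    intervalIntegral.integral_const_mul, ← mul_assoc, Real.rpow_sub_one hsa, mul_div_cancel₀ _ hsa]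
  rw [uIcc_of_le zero_le_one] at hw
  have : s - ((s - a) * w + a) = (s - a) * (1 - w) := by ring
  simp only [this, Real.mul_rpow (sub_pos.2 has).le (sub_nonneg.2 hw.2)]
  ring

theorem continuousOn_rlIntegral {a p : ℝ} {h : ℝ → ℝ} (hp : 0 < p) (hh : Continuous h) :
    ContinuousOn (rlIntegral a p h) (Ici a) := by
  have hk : IntervalIntegrable (fun w => (1 - w) ^ (p - 1)) volume 0 1 :=
    intervalIntegrable_sub_rpow (by linarith) 1 0 1
  have hc : Continuous fun s => 1 / Real.Gamma p *
      ((s - a) ^ p * ∫ w in (0 : ℝ)..1, (1 - w) ^ (p - 1) * h ((s - a) * w + a)) :=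
    continuous_const.mul
      (((continuous_id.sub continuous_const).rpow_const fun _ => Or.inr hp.le).mul
        (continuous_intervalIntegral_mul hk (by fun_prop)))
  exact hc.continuousOn.congr fun s hs => by
    rw [rlIntegral, integral_sub_rpow_mul_eq_rpow_mul_integral hp hs]

theorem integral_indicator_sub_rpow {a s τ p : ℝ} (hp : 0 < p) (haτ : a ≤ τ) (hτs : τ ≤ s) :
    ∫ u in a..s, (Ioi 0).indicator (fun y => y ^ (p - 1)) (u - τ) = (s - τ) ^ p / p := by
  rw [intervalIntegral.integral_comp_sub_right ((Ioi 0).indicator fun y => y ^ (p - 1)) τ,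
    integral_of_le (by linarith), setIntegral_indicator measurableSet_Ioi, Ioc_inter_Ioi,
    max_eq_right (by linarith), ← integral_of_le (by linarith),
    integral_rpow (Or.inl (by linarith))]
  simp [Real.zero_rpow hp.ne']

theorem integral_indicator_sub_rpow_mul {a s u p : ℝ} (hau : a ≤ u) (hus : u ≤ s) (h : ℝ → ℝ) :
    ∫ τ in a..s, (Ioi 0).indicator (fun y => y ^ (p - 1)) (u - τ) * h τ
      = ∫ τ in a..u, (u - τ) ^ (p - 1) * h τ := by
  have hind : ∀ τ, (Ioi 0).indicator (fun y => y ^ (p - 1)) (u - τ) * h τ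
      = (Iio u).indicator (fun τ => (u - τ) ^ (p - 1) * h τ) τ := fun τ => by
    by_cases hτ : τ < u <;> simp [indicator, hτ]
  simp only [hind]
  rw [integral_of_le (hau.trans hus), integral_Ioc_eq_integral_Ioo,
    setIntegral_indicator measurableSet_Iio, Ioo_inter_Iio, min_eq_right hus,
    ← integral_Ioc_eq_integral_Ioo, ← integral_of_le hau]

theorem integral_integral_sub_rpow_mul {a s p : ℝ} (hp : 0 < p) (has : a ≤ s) {h : ℝ → ℝ}
    (hh : IntegrableOn h (Ioc a s)) :
    ∫ u in a..s, ∫ τ in a..u, (u - τ) ^ (p - 1) * h τ = (∫ τ in a..s, (s - τ) ^ p * h τ) / p := by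
  set k : ℝ → ℝ := (Ioi 0).indicator fun y => y ^ (p - 1)
  -- Extending the kernel by zero turns the triangle `a < τ < u ≤ s` into a square; on it the
  -- integrand is a convolution integrand of two integrable functions.
  have hint :
      IntegrableOn (Function.uncurry fun u τ => k (u - τ) * h τ) (uIoc a s ×ˢ uIoc a s) := by
    have hk : Integrable ((Ioc 0 (s - a)).indicator fun y => y ^ (p - 1)) :=
      (integrable_indicator_iff measurableSet_Ioc).2 <|
        (intervalIntegrable_iff_integrableOn_Ioc_of_le (sub_nonneg.2 has)).1
          (intervalIntegral.intervalIntegrable_rpow' (by linarith))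
    have := ((integrable_indicator_iff measurableSet_Ioc).2 hh).convolution_integrand
      (ContinuousLinearMap.mul ℝ ℝ) hk
    rw [uIoc_of_le has]
    refine (this.integrableOn (s := Ioc a s ×ˢ Ioc a s)).congr_fun ?_
      (measurableSet_Ioc.prod measurableSet_Ioc)
    rintro ⟨u, τ⟩ ⟨⟨-, hu⟩, hτ⟩
    by_cases hτu : τ < u
    · simp [k, indicator, hτu, hτ, show u - τ ≤ s - a by linarith [hτ.1], mul_comm]
    · simp [k, indicator, hτu]
  calc ∫ u in a..s, ∫ τ in a..u, (u - τ) ^ (p - 1) * h τ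
      = ∫ u in a..s, ∫ τ in a..s, k (u - τ) * h τ := by
        refine integral_congr fun u hu => ?_
        rw [uIcc_of_le has] at hu
        exact (integral_indicator_sub_rpow_mul hu.1 hu.2 h).symm
    _ = ∫ τ in a..s, (∫ u in a..s, k (u - τ)) * h τ := by
        simp only [intervalIntegral_intervalIntegral_swap hint, intervalIntegral.integral_mul_const]
    _ = ∫ τ in a..s, (s - τ) ^ p * h τ / p := by
        refine integral_congr fun τ hτ => ?_
        rw [uIcc_of_le has] at hτ
        simp only [k, integral_indicator_sub_rpow hp hτ.1 hτ.2]
        ring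
    _ = _ := intervalIntegral.integral_div _ _

theorem rlIntegral_add_one {a s p : ℝ} (hp : 0 < p) (has : a ≤ s) {h : ℝ → ℝ}
    (hh : IntegrableOn h (Ioc a s)) :
    rlIntegral a (p + 1) h s = ∫ u in a..s, rlIntegral a p h u := by
  simp only [rlIntegral, intervalIntegral.integral_const_mul, add_sub_cancel_right,
    integral_integral_sub_rpow_mul hp has hh, Real.Gamma_add_one hp.ne']
  field_simp

theorem hasDerivAt_rlIntegral_add_one {a p t : ℝ} {h : ℝ → ℝ} (hp : 0 < p) (hh : Continuous h)
    (hat : a < t) : HasDerivAt (rlIntegral a (p + 1) h) (rlIntegral a p h t) t := by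
  have hc := continuousOn_rlIntegral (a := a) hp hh
  have hFTC : HasDerivAt (fun s => ∫ u in a..s, rlIntegral a p h u) (rlIntegral a p h t) t :=
    integral_hasDerivAt_right
      ((hc.mono (by rw [uIcc_of_le hat.le]; exact Icc_subset_Ici_self)).intervalIntegrable)
      ((hc.mono Ioi_subset_Ici_self).stronglyMeasurableAtFilter isOpen_Ioi t hat)
      (hc.continuousAt (Ici_mem_nhds hat))
  refine hFTC.congr_of_eventuallyEq ?_
  filter_upwards [Ioi_mem_nhds hat] with s hs
  exact rlIntegral_add_one hp (le_of_lt hs) hh.integrableOn_Ioc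

theorem rlIntegral_eq_add_rlIntegral_deriv {a s p : ℝ} {g g' : ℝ → ℝ} (hp : 0 < p) (has : a ≤ s)
    (hg : ContinuousOn g (Icc a s)) (hg' : ∀ τ ∈ Ioo a s, HasDerivAt g (g' τ) τ)
    (hg'i : IntervalIntegrable g' volume a s) :
    rlIntegral a p g s = g a * (s - a) ^ p / Real.Gamma (p + 1) + rlIntegral a (p + 1) g' s := by
  have hkernel : ∀ τ ∈ Ioo a s,
      HasDerivAt (fun τ => -(s - τ) ^ p / p) ((s - τ) ^ (p - 1)) τ := fun τ hτ => by
    refine ((((hasDerivAt_id' τ).const_sub s).rpow_const (p := p)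
      (Or.inl (sub_pos.2 hτ.2).ne')).neg.div_const p).congr_deriv ?_
    field_simp
  have hcont : Continuous fun τ => -(s - τ) ^ p / p :=
    ((continuous_const.sub continuous_id).rpow_const fun _ => Or.inr hp.le).neg.div_const p
  have hibp := integral_deriv_mul_eq_sub_of_hasDeriv_right hcont.continuousOn
    (by rwa [uIcc_of_le has])
    (fun τ hτ => (hkernel τ (by rwa [min_eq_left has, max_eq_right has] at hτ)).hasDerivWithinAt)
    (fun τ hτ => (hg' τ (by rwa [min_eq_left has, max_eq_right has] at hτ)).hasDerivWithinAt)
    (intervalIntegrable_sub_rpow (by linarith) s a s) hg'i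
  have hI₁ : IntervalIntegrable (fun τ => (s - τ) ^ (p - 1) * g τ) volume a s :=
    (intervalIntegrable_sub_rpow (by linarith) s a s).mul_continuousOn (by rwa [uIcc_of_le has])
  have hI₂ : ∫ τ in a..s, -(s - τ) ^ p / p * g' τ = -(∫ τ in a..s, (s - τ) ^ p * g' τ) / p := by
    simp only [neg_div, neg_mul, intervalIntegral.integral_neg, div_mul_eq_mul_div,
      intervalIntegral.integral_div]
  rw [intervalIntegral.integral_add hI₁ (hg'i.continuousOn_mul hcont.continuousOn), hI₂] at hibp
  simp only [rlIntegral, add_sub_cancel_right, Real.Gamma_add_one hp.ne']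
  have hΓ := (Real.Gamma_pos_of_pos hp).ne'
  simp only [sub_self, Real.zero_rpow hp.ne'] at hibp
  field_simp at hibp ⊢
  linear_combination hibp

theorem rlIntegral_eq_sum_add_rlIntegral_iteratedDerivWithin {a b s v : ℝ} {n m : ℕ}
    {x : ℝ → ℝ} (hab : a < b) (hv : 0 < v) (hx : ContDiffOn ℝ n x (Icc a b)) (hs : s ∈ Icc a b)
    (hm : m ≤ n) :
    rlIntegral a v x s = ∑ k ∈ Finset.range m, iteratedDerivWithin k x (Icc a b) a *
        (s - a) ^ (v + k) / Real.Gamma (v + k + 1)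
      + rlIntegral a (v + m) (iteratedDerivWithin m x (Icc a b)) s := by
  induction m with
  | zero => simp
  | succ m ih =>
    have hU := uniqueDiffOn_Icc hab
    have hsub : Icc a s ⊆ Icc a b := Icc_subset_Icc_right hs.2
    rw [ih (by omega), rlIntegral_eq_add_rlIntegral_deriv (by positivity) hs.1
      ((hx.continuousOn_iteratedDerivWithin (by norm_cast; omega) hU).mono hsub)
      (fun τ hτ => hx.hasDerivAt_iteratedDerivWithin hU hm
        (Icc_mem_nhds hτ.1 (hτ.2.trans_le hs.2)))
      ((hx.continuousOn_iteratedDerivWithin (by exact_mod_cast hm) hU).mono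
        (by rwa [uIcc_of_le hs.1])).intervalIntegrable,
      Finset.sum_range_succ, Nat.cast_succ, ← add_assoc v]
    exact (add_assoc _ _ _).symm

theorem iteratedDerivWithin_rlIntegral {a b t v : ℝ} {n : ℕ} {x : ℝ → ℝ} (hv : 0 < v)
    (hx : ContDiffOn ℝ n x (Icc a b)) (ht : t ∈ Ioc a b) :
    iteratedDerivWithin n (rlIntegral a v x) (Icc a b) t =
      ∑ k ∈ Finset.range n, iteratedDerivWithin k x (Icc a b) a / Real.Gamma (v + k - n + 1) *
          (t - a) ^ (v + k - n)
        + rlIntegral a v (iteratedDerivWithin n x (Icc a b)) t := by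
  have hab : a < b := ht.1.trans_le ht.2
  -- Extend `x^(n)` continuously to all of `ℝ` and work on `Ioc a b`, where every `f j` has a
  -- genuine derivative, also at `t = b`.
  obtain ⟨h, hh, hhX⟩ := (hx.continuousOn_iteratedDerivWithin le_rfl
    (uniqueDiffOn_Icc hab)).exists_continuous_eqOn_Icc hab.le
  let f : ℕ → ℝ → ℝ := fun j s => ∑ k ∈ Finset.range n, iteratedDerivWithin k x (Icc a b) a *
      ((s - a) ^ (v + k - j) / Real.Gamma (v + k - j + 1)) + rlIntegral a (v + n - j) h s
  have hchain : ∀ j < n, ∀ s ∈ Ioc a b, HasDerivWithinAt (f j) (f (j + 1) s) (Ioc a b) s := by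
    intro j hj s hs
    have hp : 0 < v + n - j - 1 := by
      have : (j : ℝ) + 1 ≤ n := by exact_mod_cast hj
      linarith
    have hI := hasDerivAt_rlIntegral_add_one (a := a) hp hh hs.1
    rw [sub_add_cancel] at hI
    have hsum := HasDerivAt.fun_sum (u := Finset.range n) fun k _ =>
      (hasDerivAt_sub_rpow_div_Gamma hs.1 (v + k - j)).const_mul
        (iteratedDerivWithin k x (Icc a b) a)
    have hexp : ∀ r : ℝ, r - (j + 1) = r - j - 1 := fun r => by ring
    refine (hsum.add hI).hasDerivWithinAt.congr_deriv ?_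
    simp only [f, Nat.cast_succ, hexp, sub_add_cancel]
  have h0 : EqOn (rlIntegral a v x) (f 0) (Icc a b) := by
    intro s hs
    rw [rlIntegral_eq_sum_add_rlIntegral_iteratedDerivWithin hab hv hx hs le_rfl,
      rlIntegral_congr hs.1 (hhX.symm.mono (Icc_subset_Icc_right hs.2))]
    simp [f, mul_div_assoc]
  have hIcc : Icc a b =ᶠ[𝓝 t] Ioc a b := by
    filter_upwards [Ioi_mem_nhds ht.1] with s hs
    exact propext ⟨fun hs' => ⟨hs, hs'.2⟩, fun hs' => ⟨hs'.1.le, hs'.2⟩⟩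
  calc iteratedDerivWithin n (rlIntegral a v x) (Icc a b) t
      = iteratedDerivWithin n (f 0) (Ioc a b) t := by
        rw [iteratedDerivWithin_congr h0 (Ioc_subset_Icc_self ht)]
        simp only [iteratedDerivWithin, iteratedFDerivWithin_congr_set hIcc n]
    _ = f n t := iteratedDerivWithin_eq_of_hasDerivWithinAt (uniqueDiffOn_Ioc a b) hchain le_rfl ht
    _ = _ := by
        simp only [f, add_sub_cancel_right,
          rlIntegral_congr ht.1.le (hhX.mono (Icc_subset_Icc_right ht.2))]
        congr 1
        exact Finset.sum_congr rfl fun k _ => by ring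

theorem caputo_eq_riemannLiouville_sub_initial_terms_general
    (a b : ℝ) (n : ℕ) (q : ℝ)
    (hq2 : q < n)
    (x : ℝ → ℝ) (hx : ContDiffOn ℝ n x (Set.Icc a b))
    (t : ℝ) (ht : t ∈ Set.Ioc a b) :
    (1 / Real.Gamma ((n : ℝ) - q)) *
        ∫ τ in a..t, (t - τ) ^ ((n : ℝ) - q - 1) * iteratedDerivWithin n x (Set.Icc a b) τ
      = iteratedDerivWithin n
          (fun s => (1 / Real.Gamma ((n : ℝ) - q)) *
            ∫ τ in a..s, (s - τ) ^ ((n : ℝ) - q - 1) * x τ) (Set.Icc a b) t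
        - ∑ k ∈ Finset.range n,
            (iteratedDerivWithin k x (Set.Icc a b) a / Real.Gamma ((k : ℝ) - q + 1)) *
              (t - a) ^ ((k : ℝ) - q) := by
  change rlIntegral a (n - q) (iteratedDerivWithin n x (Icc a b)) t =
    iteratedDerivWithin n (rlIntegral a (n - q) x) (Icc a b) t - _
  have hexp : ∀ k : ℕ, (n : ℝ) - q + k - n = k - q := fun k => by ring
  rw [iteratedDerivWithin_rlIntegral (sub_pos.2 hq2) hx ht]
  simp only [hexp, add_sub_cancel_left]

/-- **Relation between the Caputo and Riemann–Liouville fractional derivatives.**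
Let `a < b`, let `n` be a positive integer and `n - 1 < q < n`. If `x` is `n` times
continuously differentiable on `[a, b]`, then for every `t ∈ (a, b]` the Caputo
fractional derivative of order `q` of `x` at `t` equals the Riemann–Liouville
fractional derivative of order `q` of `x` at `t` (that is, the `n`-th derivative at `t`
of `s ↦ (1/Γ(n-q)) ∫_a^s (s-τ)^(n-q-1) x(τ) dτ`) minus the initial-value correction
terms `Σ_{k=0}^{n-1} (x^{(k)}(a)/Γ(k-q+1)) (t-a)^(k-q)`. -/
theorem caputo_eq_riemannLiouville_sub_initial_terms
    (a b : ℝ) (hab : a < b) (n : ℕ) (hn : 0 < n) (q : ℝ)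
    (hq1 : (n : ℝ) - 1 < q) (hq2 : q < n)
    (x : ℝ → ℝ) (hx : ContDiffOn ℝ n x (Set.Icc a b))
    (t : ℝ) (ht : t ∈ Set.Ioc a b) :
    (1 / Real.Gamma ((n : ℝ) - q)) *
        ∫ τ in a..t, (t - τ) ^ ((n : ℝ) - q - 1) * iteratedDerivWithin n x (Set.Icc a b) τ
      = iteratedDerivWithin n
          (fun s => (1 / Real.Gamma ((n : ℝ) - q)) *
            ∫ τ in a..s, (s - τ) ^ ((n : ℝ) - q - 1) * x τ) (Set.Icc a b) t
        - ∑ k ∈ Finset.range n,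
            (iteratedDerivWithin k x (Set.Icc a b) a / Real.Gamma ((k : ℝ) - q + 1)) *
              (t - a) ^ ((k : ℝ) - q) :=
  caputo_eq_riemannLiouville_sub_initial_terms_general a b n q hq2 x hx t ht
end

section
/- Let a < b be real numbers and let x : [a,b] → ℝ be continuously differentiable. Then for every t ∈ (a,b], the Riemann–Liouville fractional derivative of order q tends to the classical derivative as q → 1⁻: writing ⲟD_t^q x(t) for the derivative, evaluated at t, of the function s ↦ (1/Γ(1−q)) ∫_a^s (s−τ)^{−q} x(τ) dτ, one has lim_{q→1⁻} ⲟD_t^q x(t) = x′(t). -/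
/-!
The substitution `τ = t - (t - a) w ^ (1 / (1 - q))` turns the fractional integral into
`(t - a) ^ (1 - q) / (1 - q) * ∫₀¹ x (t - (t - a) w ^ (1 / (1 - q))) dw`, an integral over a fixed
domain that can be differentiated in `t` under the integral sign once `x` is extended to a `C¹`
function on `ℝ`. With `Γ(2 - q) = (1 - q) Γ(1 - q)` and `u = w ^ (1 / (1 - q))` the derivative
becomes `((1 - q) (t - a) ^ (-q) ∫₀¹ x(…) dw + (t - a) ^ (1 - q) ∫₀¹ (1 - u) x'(…) dw) / Γ(2 - q)`.
As `q → 1⁻`, `u → 0` for every `w ∈ (0, 1)`, so by dominated convergence this tends to `x'(t)`.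
-/

open MeasureTheory Set Filter Function
open scoped Topology

theorem exists_hasDerivAt_eqOn_of_contDiffOn_Icc {a b : ℝ} (hab : a < b) {x : ℝ → ℝ}
    (hx : ContDiffOn ℝ 1 x (Icc a b)) :
    ∃ X g : ℝ → ℝ, Continuous g ∧ (∀ y, HasDerivAt X (g y) y) ∧ EqOn x X (Icc a b) ∧
      EqOn g (derivWithin x (Icc a b)) (Icc a b) := by
  set g := IccExtend hab.le ((Icc a b).domRestrict (derivWithin x (Icc a b)))
  have hg : Continuous g := (continuousOn_iff_continuous_domRestrict.1
    (hx.continuousOn_derivWithin (uniqueDiffOn_Icc hab) le_rfl)).Icc_extend'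
  have hgx : EqOn g (derivWithin x (Icc a b)) (Icc a b) := fun y hy => IccExtend_of_mem _ _ hy
  refine ⟨fun s => x a + ∫ u in a..s, g u, g, hg,
    fun y => (hg.integral_hasStrictDerivAt a y).hasDerivAt.const_add _, fun s hs => ?_, hgx⟩
  have hderiv : ∀ y ∈ Ioo a s, HasDerivAt x (g y) y := fun y hy => by
    have hy' : y ∈ Ioo a b := ⟨hy.1, hy.2.trans_le hs.2⟩
    rw [hgx (Ioo_subset_Icc_self hy')]
    exact (hx.differentiableOn one_ne_zero y (Ioo_subset_Icc_self hy')).hasDerivWithinAt.hasDerivAt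
      (Icc_mem_nhds hy'.1 hy'.2)
  change x s = x a + _
  rw [intervalIntegral.integral_eq_sub_of_hasDerivAt_of_le hs.1
    (hx.continuousOn.mono (Icc_subset_Icc_right hs.2)) hderiv (hg.intervalIntegrable _ _)]
  ring

section ParametricIntegral

variable {α β E : Type*} [MeasurableSpace α] [TopologicalSpace β]
  [NormedAddCommGroup E] [NormedSpace ℝ E] {μ : Measure α}

theorem tendsto_integral_comp_of_tendsto [CompleteSpace E] [IsProbabilityMeasure μ] {ι : Type*}
    {l : Filter ι} [l.IsCountablyGenerated] {F : β → E} (hF : Continuous F) {K : Set β}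
    (hK : IsCompact K) {c : ι → α → β} {y₀ : β} (hc : ∀ᶠ i in l, AEStronglyMeasurable (c i) μ)
    (hcK : ∀ᶠ i in l, ∀ᵐ w ∂μ, c i w ∈ K) (hlim : ∀ᵐ w ∂μ, Tendsto (fun i => c i w) l (𝓝 y₀)) :
    Tendsto (fun i => ∫ w, F (c i w) ∂μ) l (𝓝 (F y₀)) := by
  obtain ⟨M, hM⟩ := hK.exists_bound_of_continuousOn hF.continuousOn
  simpa [integral_const] using tendsto_integral_filter_of_dominated_convergence (fun _ => M)
    (hc.mono fun i hi => hF.comp_aestronglyMeasurable hi)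
    (hcK.mono fun i hi => hi.mono fun w hw => hM _ hw) (integrable_const M)
    (hlim.mono fun w hw => (hF.tendsto y₀).comp hw)

theorem hasDerivAt_integral_comp_of_mem_compact [IsFiniteMeasure μ] {F F' : ℝ → β → E}
    (hF : Continuous (uncurry F)) (hF' : Continuous (uncurry F'))
    (hderiv : ∀ s y, HasDerivAt (F · y) (F' s y) s) {K : Set β} (hK : IsCompact K)
    {c : α → β} (hc : AEStronglyMeasurable c μ) (hcK : ∀ᵐ w ∂μ, c w ∈ K) (t : ℝ) :
    HasDerivAt (fun s => ∫ w, F s (c w) ∂μ) (∫ w, F' t (c w) ∂μ) t := by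
  have hcomp : ∀ {G : ℝ → β → E}, Continuous (uncurry G) → ∀ s,
      AEStronglyMeasurable (fun w => G s (c w)) μ := fun hG s =>
    (hG.comp (Continuous.prodMk_right s)).comp_aestronglyMeasurable hc
  obtain ⟨M, hM⟩ := ((isCompact_closedBall t 1).prod hK).exists_bound_of_continuousOn
    hF'.continuousOn
  obtain ⟨N, hN⟩ :=
    hK.exists_bound_of_continuousOn (hF.comp (Continuous.prodMk_right t)).continuousOn
  exact (hasDerivAt_integral_of_dominated_loc_of_deriv_le (Metric.ball_mem_nhds t one_pos)
    (Eventually.of_forall (hcomp hF)) (.of_bound (hcomp hF t) N (hcK.mono fun w hw => hN _ hw))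
    (hcomp hF' t)
    (hcK.mono fun w hw s hs => hM (s, c w) ⟨Metric.ball_subset_closedBall hs, hw⟩)
    (integrable_const M) (ae_of_all _ fun w s _ => hderiv s (c w))).2

end ParametricIntegral

theorem setIntegral_Ioo_zero_one_rpow_sub_one_smul {E : Type*} [NormedAddCommGroup E]
    [NormedSpace ℝ E] {p : ℝ} (hp : 0 < p) (f : ℝ → E) :
    ∫ u in Ioo (0 : ℝ) 1, u ^ (p - 1) • f u = p⁻¹ • ∫ w in Ioo (0 : ℝ) 1, f (w ^ p⁻¹) := by
  have hIoo : Ioi (0 : ℝ) ∩ Ioo 0 1 = Ioo 0 1 := inter_eq_right.2 Ioo_subset_Ioi_self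
  have key :=
    integral_comp_rpow_Ioi_of_pos hp (g := (Ioo (0 : ℝ) 1).indicator fun w => f (w ^ p⁻¹))
  rw [setIntegral_indicator measurableSet_Ioo, hIoo] at key
  rw [← key, setIntegral_congr_fun measurableSet_Ioi (g := (Ioo (0 : ℝ) 1).indicator
    fun u => (p * u ^ (p - 1)) • f u), setIntegral_indicator measurableSet_Ioo, hIoo]
  · simp_rw [mul_smul, integral_smul, smul_smul, inv_mul_cancel₀ hp.ne', one_smul]
  · intro u (hu : 0 < u)
    have hmem : u ^ p ∈ Ioo (0 : ℝ) 1 ↔ u ∈ Ioo (0 : ℝ) 1 := by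
      simp [hu, Real.rpow_pos_of_pos hu, Real.rpow_lt_one_iff_of_pos hu, hp, not_lt.2 hp.le]
    by_cases h : u ∈ Ioo (0 : ℝ) 1
    · simp [indicator_of_mem h, indicator_of_mem (hmem.2 h), ← Real.rpow_mul hu.le, hp.ne']
    · simp [indicator_of_notMem h, indicator_of_notMem (mt hmem.1 h)]

theorem intervalIntegral_sub_rpow_neg_mul_eq {a s q : ℝ} (has : a < s) (hq : q < 1)
    (f : ℝ → ℝ) :
    ∫ τ in a..s, (s - τ) ^ (-q) * f τ =
      (s - a) ^ (1 - q) / (1 - q) * ∫ w in Ioo (0 : ℝ) 1, f (s - (s - a) * w ^ (1 - q)⁻¹) := by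
  have hsa : 0 < s - a := sub_pos.2 has
  calc ∫ τ in a..s, (s - τ) ^ (-q) * f τ
      = (s - a) * ∫ u in (0 : ℝ)..1, ((s - a) * u) ^ (-q) * f (s - (s - a) * u) := by
        have h := intervalIntegral.integral_comp_sub_mul (fun τ => (s - τ) ^ (-q) * f τ)
          (a := 0) (b := 1) hsa.ne' s
        simp only [sub_sub_cancel, mul_one, mul_zero, sub_zero] at h
        rw [h, smul_eq_mul, mul_inv_cancel_left₀ hsa.ne']
    _ = (s - a) ^ (1 - q) * ∫ u in Ioo (0 : ℝ) 1, u ^ (1 - q - 1) • f (s - (s - a) * u) := by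
        rw [intervalIntegral.integral_of_le zero_le_one, integral_Ioc_eq_integral_Ioo,
          ← integral_const_mul, ← integral_const_mul]
        refine setIntegral_congr_fun measurableSet_Ioo fun u hu => ?_
        rw [Real.mul_rpow hsa.le hu.1.le, sub_sub_cancel_left, smul_eq_mul, Real.rpow_sub hsa,
          Real.rpow_one, Real.rpow_neg hsa.le]
        field_simp
    _ = _ := by
        rw [setIntegral_Ioo_zero_one_rpow_sub_one_smul (sub_pos.2 hq), smul_eq_mul]
        ring

theorem tendsto_setIntegral_Ioo_comp_rpow_inv_one_sub {E : Type*} [NormedAddCommGroup E]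
    [NormedSpace ℝ E] [CompleteSpace E] {F : ℝ → E} (hF : Continuous F) :
    Tendsto (fun q : ℝ => ∫ w in Ioo (0 : ℝ) 1, F (w ^ (1 - q)⁻¹)) (𝓝[<] 1) (𝓝 (F 0)) := by
  have : IsProbabilityMeasure (volume.restrict (Ioo (0 : ℝ) 1)) := ⟨by simp⟩
  have hpos : ∀ᶠ q in 𝓝[<] (1 : ℝ), 0 < (1 - q)⁻¹ :=
    eventually_mem_nhdsWithin.mono fun q hq => inv_pos.2 (sub_pos.2 hq)
  have hexp : Tendsto (fun q : ℝ => (1 - q)⁻¹) (𝓝[<] 1) atTop :=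
    tendsto_inv_nhdsGT_zero.comp (tendsto_nhdsWithin_of_tendsto_nhds_of_eventually_within _
      (((continuous_const.sub continuous_id).tendsto' 1 0 (sub_self 1)).mono_left
        nhdsWithin_le_nhds)
      (eventually_mem_nhdsWithin.mono fun q hq => mem_Ioi.2 (sub_pos.2 hq)))
  refine tendsto_integral_comp_of_tendsto hF isCompact_Icc
    (Eventually.of_forall fun q =>
      (by fun_prop : Measurable fun w : ℝ => w ^ (1 - q)⁻¹).aestronglyMeasurable)
    (hpos.mono fun q hq => (ae_restrict_mem measurableSet_Ioo).mono fun w hw =>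
      ⟨Real.rpow_nonneg hw.1.le _, Real.rpow_le_one hw.1.le hw.2.le hq.le⟩)
    ((ae_restrict_mem measurableSet_Ioo).mono fun w hw =>
      (tendsto_rpow_atTop_of_base_lt_one w (by linarith [hw.1]) hw.2).comp hexp)

theorem hasDerivAt_intervalIntegral_sub_rpow_neg_mul {X g : ℝ → ℝ}
    (hX : ∀ y, HasDerivAt X (g y) y) (hg : Continuous g) {a t q : ℝ} (hat : a < t)
    (hq : q < 1) :
    HasDerivAt (fun s => ∫ τ in a..s, (s - τ) ^ (-q) * X τ)
      ((t - a) ^ (-q) * (∫ w in Ioo (0 : ℝ) 1, X (t - (t - a) * w ^ (1 - q)⁻¹)) +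
        (t - a) ^ (1 - q) / (1 - q) *
          ∫ w in Ioo (0 : ℝ) 1, (1 - w ^ (1 - q)⁻¹) * g (t - (t - a) * w ^ (1 - q)⁻¹)) t := by
  have hXc : Continuous X := continuous_iff_continuousAt.2 fun y => (hX y).continuousAt
  have hpow : HasDerivAt (fun s => (s - a) ^ (1 - q) / (1 - q)) ((t - a) ^ (-q)) t := by
    have h := ((Real.hasDerivAt_rpow_const (p := 1 - q) (Or.inl (sub_pos.2 hat).ne')).comp t
      ((hasDerivAt_id t).sub_const a)).div_const (1 - q)
    refine h.congr_deriv ?_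
    rw [mul_one, sub_sub_cancel_left, mul_div_cancel_left₀ _ (sub_pos.2 hq).ne']
  have hsegment : ∀ s y : ℝ, HasDerivAt (fun s => s - (s - a) * y) (1 - y) s := fun s y =>
    ((hasDerivAt_id' s).sub (((hasDerivAt_id' s).sub_const a).mul_const y)).congr_deriv (by ring)
  have hint := hasDerivAt_integral_comp_of_mem_compact (μ := volume.restrict (Ioo (0 : ℝ) 1))
    (F := fun s y => X (s - (s - a) * y)) (F' := fun s y => (1 - y) * g (s - (s - a) * y))
    (by fun_prop) (by fun_prop)
    (fun s y => ((hX _).comp s (hsegment s y)).congr_deriv (mul_comm _ _))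
    isCompact_Icc (c := fun w => w ^ (1 - q)⁻¹) (by fun_prop)
    ((ae_restrict_mem measurableSet_Ioo).mono fun w hw =>
      ⟨Real.rpow_nonneg hw.1.le _,
        Real.rpow_le_one hw.1.le hw.2.le (inv_pos.2 (sub_pos.2 hq)).le⟩)
    t
  refine (hpow.mul hint).congr_of_eventuallyEq ?_
  filter_upwards [lt_mem_nhds hat] with s hs
  exact intervalIntegral_sub_rpow_neg_mul_eq hs hq X

theorem one_div_Gamma_one_sub_mul_add_div {q : ℝ} (hq : q < 1) (A B Q : ℝ) :
    1 / Real.Gamma (1 - q) * (A + B / (1 - q) * Q) =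
      ((1 - q) * A + B * Q) / Real.Gamma (2 - q) := by
  rw [show 2 - q = (1 - q) + 1 by ring, Real.Gamma_add_one (sub_pos.2 hq).ne']
  field_simp [(sub_pos.2 hq).ne', (Real.Gamma_pos_of_pos (sub_pos.2 hq)).ne']

theorem tendsto_Gamma_two_sub_nhdsLT_one :
    Tendsto (fun q : ℝ => Real.Gamma (2 - q)) (𝓝[<] 1) (𝓝 1) := by
  have h : ContinuousAt Real.Gamma (2 - 1) := (Real.differentiableAt_Gamma fun m => by
    linarith [(Nat.cast_nonneg m : (0 : ℝ) ≤ m)]).continuousAt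
  simpa [comp_def, show (2 : ℝ) - 1 = 1 by norm_num] using
    ((h.comp (continuous_sub_left 2).continuousAt).continuousWithinAt (s := Iio 1)).tendsto

theorem tendsto_derivWithin_riemannLiouville_of_hasDerivAt {X g : ℝ → ℝ}
    (hX : ∀ y, HasDerivAt X (g y) y) (hg : Continuous g) {a b t : ℝ} (ht : t ∈ Ioc a b) :
    Tendsto (fun q : ℝ => derivWithin
        (fun s => 1 / Real.Gamma (1 - q) * ∫ τ in a..s, (s - τ) ^ (-q) * X τ) (Icc a b) t)
      (𝓝[<] 1) (𝓝 (g t)) := by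
  have hXc : Continuous X := continuous_iff_continuousAt.2 fun y => (hX y).continuousAt
  set Φ₁ := fun q : ℝ => ∫ w in Ioo (0 : ℝ) 1, X (t - (t - a) * w ^ (1 - q)⁻¹)
  set Φ₂ := fun q : ℝ =>
    ∫ w in Ioo (0 : ℝ) 1, (1 - w ^ (1 - q)⁻¹) * g (t - (t - a) * w ^ (1 - q)⁻¹)
  have hderiv : ∀ q < 1, derivWithin
      (fun s => 1 / Real.Gamma (1 - q) * ∫ τ in a..s, (s - τ) ^ (-q) * X τ) (Icc a b) t =
      ((1 - q) * ((t - a) ^ (-q) * Φ₁ q) + (t - a) ^ (1 - q) * Φ₂ q) / Real.Gamma (2 - q) :=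
    fun q hq => by
      rw [((hasDerivAt_intervalIntegral_sub_rpow_neg_mul hX hg ht.1 hq).const_mul
        _).hasDerivWithinAt.derivWithin
        (uniqueDiffOn_Icc (ht.1.trans_le ht.2) t (Ioc_subset_Icc_self ht)),
        one_div_Gamma_one_sub_mul_add_div hq]
  have hΦ₁ : Tendsto Φ₁ (𝓝[<] 1) (𝓝 (X t)) := by
    simpa using tendsto_setIntegral_Ioo_comp_rpow_inv_one_sub
      (F := fun y => X (t - (t - a) * y)) (by fun_prop)
  have hΦ₂ : Tendsto Φ₂ (𝓝[<] 1) (𝓝 (g t)) := by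
    simpa using tendsto_setIntegral_Ioo_comp_rpow_inv_one_sub
      (F := fun y => (1 - y) * g (t - (t - a) * y)) (by fun_prop)
  have hlim : ∀ {f : ℝ → ℝ}, ContinuousAt f 1 → Tendsto f (𝓝[<] 1) (𝓝 (f 1)) :=
    fun hf => hf.continuousWithinAt
  have hpow : ∀ r : ℝ,
      Tendsto (fun q : ℝ => (t - a) ^ (r - q)) (𝓝[<] 1) (𝓝 ((t - a) ^ (r - 1))) := fun r =>
    hlim ((Real.continuousAt_const_rpow (sub_pos.2 ht.1).ne').comp
      (continuous_sub_left r).continuousAt)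
  have h1q : Tendsto (fun q : ℝ => 1 - q) (𝓝[<] 1) (𝓝 0) := by
    simpa using hlim (continuous_sub_left 1).continuousAt
  refine Tendsto.congr' (eventually_mem_nhdsWithin.mono fun q hq => (hderiv q hq).symm) ?_
  convert ((h1q.mul ((hpow 0).mul hΦ₁)).add ((hpow 1).mul hΦ₂)).div
    tendsto_Gamma_two_sub_nhdsLT_one one_ne_zero using 2 <;> simp

theorem riemannLiouville_tendsto_deriv_of_order_tendsto_one_general
    (a b : ℝ) (x : ℝ → ℝ) (hx : ContDiffOn ℝ 1 x (Set.Icc a b))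
    (t : ℝ) (ht : t ∈ Set.Ioc a b) :
    Filter.Tendsto
      (fun q : ℝ =>
        derivWithin
          (fun s => (1 / Real.Gamma (1 - q)) * ∫ τ in a..s, (s - τ) ^ (-q) * x τ)
          (Set.Icc a b) t)
      (nhdsWithin 1 (Set.Iio 1))
      (nhds (derivWithin x (Set.Icc a b) t)) := by
  obtain ⟨X, g, hg, hX, hxX, hgx⟩ :=
    exists_hasDerivAt_eqOn_of_contDiffOn_Icc (ht.1.trans_le ht.2) hx
  have htI : t ∈ Icc a b := Ioc_subset_Icc_self ht
  rw [← hgx htI]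
  refine (tendsto_derivWithin_riemannLiouville_of_hasDerivAt hX hg ht).congr fun q => ?_
  have hEq : EqOn (fun s => 1 / Real.Gamma (1 - q) * ∫ τ in a..s, (s - τ) ^ (-q) * X τ)
      (fun s => 1 / Real.Gamma (1 - q) * ∫ τ in a..s, (s - τ) ^ (-q) * x τ) (Icc a b) :=
    fun s hs => by
      refine congrArg _ (intervalIntegral.integral_congr fun τ hτ => ?_)
      rw [uIcc_of_le hs.1] at hτ
      simp only [hxX (Icc_subset_Icc_right hs.2 hτ)]
  exact derivWithin_congr hEq (hEq htI)

/-- **The Riemann–Liouville fractional derivative tends to the classical derivative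
as the order `q` tends to `1⁻`.** If `x` is continuously differentiable on `[a, b]`
with `a < b`, then for every `t ∈ (a, b]`, writing `ⲟD_t^q x(t)` for the derivative
at `t` of `s ↦ (1/Γ(1-q)) ∫_a^s (s-τ)^(-q) x(τ) dτ`, one has
`lim_{q → 1⁻} ⲟD_t^q x(t) = x'(t)`. -/
theorem riemannLiouville_tendsto_deriv_of_order_tendsto_one
    (a b : ℝ) (hab : a < b) (x : ℝ → ℝ) (hx : ContDiffOn ℝ 1 x (Set.Icc a b))
    (t : ℝ) (ht : t ∈ Set.Ioc a b) :
    Filter.Tendsto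
      (fun q : ℝ =>
        derivWithin
          (fun s => (1 / Real.Gamma (1 - q)) * ∫ τ in a..s, (s - τ) ^ (-q) * x τ)
          (Set.Icc a b) t)
      (nhdsWithin 1 (Set.Iio 1))
      (nhds (derivWithin x (Set.Icc a b) t)) :=
  riemannLiouville_tendsto_deriv_of_order_tendsto_one_general a b x hx t ht
end

section
/- Fix t₀ < t_f, dimensions n, m, a nonempty compact set U ⊆ ℝ^m, a continuous map f̃ : ℝ × ℝⁿ × ℝ^m → ℝⁿ, an integer r ≥ 1, orders v₁, …, v_r > 0, continuous functions g₁, …, g_r : ℝ × ℝⁿ × ℝ^m → ℝ, and a continuous terminal cost h : ℝⁿ → ℝ. Then the value function V satisfies Bellman's principle of optimality: for all t ∈ [t₀, t_f], s ∈ [t, t_f], and x₀ ∈ ℝⁿ, V(t, x₀) = inf over admissible pairs (x, u) from (t, x₀) of [ Σ_{j=1}^r (1/Γ(v_j)) ∫_t^s (t_f − τ)^{v_j−1} g_j(τ, x(τ), u(τ)) dτ + V(s, x(s)) ], where both infima are taken in the extended real numbers. -/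
/-!
Cutting an admissible pair from `(t, x₀)` at time `s` leaves an admissible pair from
`(s, x(s))`, and conversely an admissible pair from `(t, x₀)` can be continued at `s` by any
admissible pair from `(s, x(s))`. Because every kernel `(t_f - τ)^(v_j - 1)` is anchored at the
fixed final time, the cost is additive under both operations: it is the running cost on `[t, s]`
plus the cost of the tail from `(s, x(s))`. Cutting gives `V(t, x₀) ≥` the right-hand side,
continuing gives `≤`, once the real running cost is moved through the infimum over tails.
-/

open MeasureTheory Set

noncomputable section

/-- An **admissible pair** `(x, u)` from `(t, x₀)` for the controlled dynamics
`ẋ = f̃(τ, x, u)` on `[t, t_f]`: `u` is a measurable control taking values in the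
control set `U`, and `x` is a continuous trajectory satisfying the integral form of
the dynamics, `x(τ) = x₀ + ∫_t^τ f̃(σ, x(σ), u(σ)) dσ` for all `τ ∈ [t, t_f]`. -/
structure AdmissiblePair (tf : ℝ) {n m : ℕ} (U : Set (EuclideanSpace ℝ (Fin m)))
    (ftil : ℝ → EuclideanSpace ℝ (Fin n) → EuclideanSpace ℝ (Fin m) →
      EuclideanSpace ℝ (Fin n))
    (t : ℝ) (x0 : EuclideanSpace ℝ (Fin n)) where
  x : ℝ → EuclideanSpace ℝ (Fin n)
  u : ℝ → EuclideanSpace ℝ (Fin m)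
  u_mem : ∀ τ ∈ Icc t tf, u τ ∈ U
  u_meas : Measurable ((Icc t tf).restrict u)
  x_cont : ContinuousOn x (Icc t tf)
  x_eq : ∀ τ ∈ Icc t tf, x τ = x0 + ∫ σ in t..τ, ftil σ (x σ) (u σ)

/-- The **generalized (fractional-order) performance index** of an admissible pair:
`J(t, x₀; x, u) = Σ_j (1/Γ(v_j)) ∫_t^{t_f} (t_f - τ)^(v_j - 1) g_j(τ, x(τ), u(τ)) dτ
  + h(x(t_f))`, with kernels anchored at the fixed final time `t_f`. -/
def fracCost (tf : ℝ) {n m : ℕ} {U : Set (EuclideanSpace ℝ (Fin m))}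
    {ftil : ℝ → EuclideanSpace ℝ (Fin n) → EuclideanSpace ℝ (Fin m) →
      EuclideanSpace ℝ (Fin n)}
    {r : ℕ} (v : Fin r → ℝ)
    (g : Fin r → ℝ → EuclideanSpace ℝ (Fin n) → EuclideanSpace ℝ (Fin m) → ℝ)
    (h : EuclideanSpace ℝ (Fin n) → ℝ)
    {t : ℝ} {x0 : EuclideanSpace ℝ (Fin n)} (p : AdmissiblePair tf U ftil t x0) : ℝ :=
  (∑ j, (1 / Real.Gamma (v j)) *
      ∫ τ in t..tf, (tf - τ) ^ (v j - 1) * g j τ (p.x τ) (p.u τ)) + h (p.x tf)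

/-- The **value function**: the infimum, in the extended reals, of the generalized
performance index over all admissible pairs from `(t, x₀)`. -/
def fracValue (tf : ℝ) {n m : ℕ} (U : Set (EuclideanSpace ℝ (Fin m)))
    (ftil : ℝ → EuclideanSpace ℝ (Fin n) → EuclideanSpace ℝ (Fin m) →
      EuclideanSpace ℝ (Fin n))
    {r : ℕ} (v : Fin r → ℝ)
    (g : Fin r → ℝ → EuclideanSpace ℝ (Fin n) → EuclideanSpace ℝ (Fin m) → ℝ)
    (h : EuclideanSpace ℝ (Fin n) → ℝ)
    (t : ℝ) (x0 : EuclideanSpace ℝ (Fin n)) : EReal :=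
  ⨅ p : AdmissiblePair tf U ftil t x0, ((fracCost tf v g h p : ℝ) : EReal)

theorem EReal.coe_add_iInf {ι : Sort*} (a : ℝ) (f : ι → EReal) :
    (a : EReal) + ⨅ i, f i = ⨅ i, (a : EReal) + f i :=
  Monotone.map_iInf_of_continuousAt
    ((EReal.continuousAt_add (Or.inl (EReal.coe_ne_top a)) (Or.inl (EReal.coe_ne_bot a))).comp
      (continuousAt_const.prodMk continuousAt_id))
    (fun _ _ hxy => add_le_add_right hxy _) (EReal.add_top_of_ne_bot (EReal.coe_ne_bot a))

section Integrability

variable {X Y G : Type*} [TopologicalSpace X] [MeasurableSpace X] [BorelSpace X]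
  [SecondCountableTopology X] [TopologicalSpace.PseudoMetrizableSpace X]
  [TopologicalSpace Y] [MeasurableSpace Y] [BorelSpace Y]
  [SecondCountableTopology Y] [TopologicalSpace.PseudoMetrizableSpace Y]
  [NormedAddCommGroup G] {U : Set Y} {x : ℝ → X} {u : ℝ → Y} {Φ : ℝ × X × Y → G} {a b : ℝ}

theorem memLp_top_comp_of_isCompact (hU : IsCompact U) (hx : ContinuousOn x (Icc a b))
    (hu : Measurable ((Icc a b).domRestrict u)) (huU : ∀ τ ∈ Icc a b, u τ ∈ U)
    (hΦ : Continuous Φ) :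
    MemLp (fun τ => Φ (τ, x τ, u τ)) ⊤ (volume.restrict (Icc a b)) := by
  obtain ⟨C, hC⟩ := (isCompact_Icc.prod ((isCompact_Icc.image_of_continuousOn hx).prod hU))
    |>.exists_bound_of_continuousOn hΦ.continuousOn
  have hxu : AEMeasurable (fun τ => (τ, x τ, u τ)) (volume.restrict (Icc a b)) :=
    aemeasurable_id.prodMk ((hx.aemeasurable measurableSet_Icc).prodMk
      ((aemeasurable_restrict_iff_comap_subtype measurableSet_Icc).mpr hu.aemeasurable))
  exact memLp_top_of_bound (hΦ.comp_aestronglyMeasurable hxu.aestronglyMeasurable) C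
    ((ae_restrict_iff' measurableSet_Icc).2 <| ae_of_all _ fun τ hτ =>
      hC _ ⟨hτ, mem_image_of_mem x hτ, huU τ hτ⟩)

end Integrability

theorem MeasureTheory.MemLp.intervalIntegrable_of_top {E : Type*} [NormedAddCommGroup E]
    {f : ℝ → E} {a b c d : ℝ} (hf : MemLp f ⊤ (volume.restrict (Icc a b)))
    (hc : c ∈ Icc a b) (hd : d ∈ Icc a b) : IntervalIntegrable f volume c d :=
  intervalIntegrable_iff.2 <| IntegrableOn.mono_set (hf.integrable le_top)
    (uIoc_subset_uIcc.trans (uIcc_subset_Icc hc hd))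

theorem IntervalIntegrable.mul_memLp_top {𝕜 : Type*} [NormedRing 𝕜] {k f : ℝ → 𝕜}
    {a b c d : ℝ} (hk : IntervalIntegrable k volume c d)
    (hf : MemLp f ⊤ (volume.restrict (Icc a b))) (hc : c ∈ Icc a b) (hd : d ∈ Icc a b) :
    IntervalIntegrable (fun τ => k τ * f τ) volume c d :=
  intervalIntegrable_iff.2 <| (intervalIntegrable_iff.1 hk).mul_of_top_left <|
    hf.mono_measure <| Measure.restrict_mono (uIoc_subset_uIcc.trans (uIcc_subset_Icc hc hd)) le_rfl

theorem intervalIntegrable_sub_rpow_s6 {p : ℝ} (hp : -1 < p) (T c d : ℝ) :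
    IntervalIntegrable (fun τ => (T - τ) ^ p) volume c d := by
  simpa using
    (intervalIntegral.intervalIntegrable_rpow' (a := T - c) (b := T - d) hp).comp_sub_left T

theorem intervalIntegral.integral_congr_uIoc {E : Type*} [NormedAddCommGroup E] [NormedSpace ℝ E]
    {f g : ℝ → E} {a b : ℝ} (h : EqOn f g (uIoc a b)) :
    ∫ τ in a..b, f τ = ∫ τ in a..b, g τ :=
  intervalIntegral.integral_congr_ae (ae_of_all _ h)

def runningCost (tf : ℝ) {X Y : Type*} {r : ℕ} (v : Fin r → ℝ) (g : Fin r → ℝ → X → Y → ℝ)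
    (x : ℝ → X) (u : ℝ → Y) (a b : ℝ) : ℝ :=
  ∑ j, (1 / Real.Gamma (v j)) * ∫ τ in a..b, (tf - τ) ^ (v j - 1) * g j τ (x τ) (u τ)

section RunningCost

variable {tf : ℝ} {X Y : Type*} {r : ℕ} {v : Fin r → ℝ} {g : Fin r → ℝ → X → Y → ℝ}
  {x x' : ℝ → X} {u u' : ℝ → Y} {a b c : ℝ}

theorem runningCost_add_adjacent
    (hab : ∀ j, IntervalIntegrable (fun τ => (tf - τ) ^ (v j - 1) * g j τ (x τ) (u τ)) volume a b)
    (hbc : ∀ j, IntervalIntegrable (fun τ => (tf - τ) ^ (v j - 1) * g j τ (x τ) (u τ)) volume b c) :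
    runningCost tf v g x u a b + runningCost tf v g x u b c = runningCost tf v g x u a c := by
  simp only [runningCost, ← Finset.sum_add_distrib, ← mul_add,
    intervalIntegral.integral_add_adjacent_intervals (hab _) (hbc _)]

theorem runningCost_congr (hx : EqOn x x' (uIoc a b)) (hu : EqOn u u' (uIoc a b)) :
    runningCost tf v g x u a b = runningCost tf v g x' u' a b := by
  refine Finset.sum_congr rfl fun j _ => congrArg _ <| intervalIntegral.integral_congr_uIoc ?_
  intro τ hτ
  simp only [hx hτ, hu hτ]

end RunningCost

theorem fracCost_eq_runningCost_add {tf : ℝ} {n m : ℕ} {U : Set (EuclideanSpace ℝ (Fin m))}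
    {ftil : ℝ → EuclideanSpace ℝ (Fin n) → EuclideanSpace ℝ (Fin m) → EuclideanSpace ℝ (Fin n)}
    {r : ℕ} (v : Fin r → ℝ)
    (g : Fin r → ℝ → EuclideanSpace ℝ (Fin n) → EuclideanSpace ℝ (Fin m) → ℝ)
    (h : EuclideanSpace ℝ (Fin n) → ℝ) {t : ℝ} {x0 : EuclideanSpace ℝ (Fin n)}
    (p : AdmissiblePair tf U ftil t x0) :
    fracCost tf v g h p = runningCost tf v g p.x p.u t tf + h (p.x tf) :=
  rfl

namespace AdmissiblePair

variable {tf : ℝ} {n m : ℕ} {U : Set (EuclideanSpace ℝ (Fin m))}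
  {ftil : ℝ → EuclideanSpace ℝ (Fin n) → EuclideanSpace ℝ (Fin m) → EuclideanSpace ℝ (Fin n)}
  {t s : ℝ} {x0 : EuclideanSpace ℝ (Fin n)} {c d : ℝ} {r : ℕ} {v : Fin r → ℝ}
  {g : Fin r → ℝ → EuclideanSpace ℝ (Fin n) → EuclideanSpace ℝ (Fin m) → ℝ}

theorem memLp_top_comp (p : AdmissiblePair tf U ftil t x0) (hU : IsCompact U) {G : Type*}
    [NormedAddCommGroup G] {Φ : ℝ × EuclideanSpace ℝ (Fin n) × EuclideanSpace ℝ (Fin m) → G}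
    (hΦ : Continuous Φ) :
    MemLp (fun τ => Φ (τ, p.x τ, p.u τ)) ⊤ (volume.restrict (Icc t tf)) :=
  memLp_top_comp_of_isCompact hU p.x_cont p.u_meas p.u_mem hΦ

theorem intervalIntegrable_dynamics (p : AdmissiblePair tf U ftil t x0) (hU : IsCompact U)
    (hftil : Continuous fun z : ℝ × EuclideanSpace ℝ (Fin n) × EuclideanSpace ℝ (Fin m) =>
      ftil z.1 z.2.1 z.2.2)
    (hc : c ∈ Icc t tf) (hd : d ∈ Icc t tf) :
    IntervalIntegrable (fun σ => ftil σ (p.x σ) (p.u σ)) volume c d :=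
  (p.memLp_top_comp hU hftil).intervalIntegrable_of_top hc hd

theorem runningCost_add_adjacent (p : AdmissiblePair tf U ftil t x0) (hU : IsCompact U)
    (hv : ∀ j, 0 < v j)
    (hg : ∀ j, Continuous fun z : ℝ × EuclideanSpace ℝ (Fin n) × EuclideanSpace ℝ (Fin m) =>
      g j z.1 z.2.1 z.2.2)
    (hs : s ∈ Icc t tf) :
    runningCost tf v g p.x p.u t s + runningCost tf v g p.x p.u s tf =
      runningCost tf v g p.x p.u t tf := by
  have hcost : ∀ j {c d}, c ∈ Icc t tf → d ∈ Icc t tf → IntervalIntegrable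
      (fun τ => (tf - τ) ^ (v j - 1) * g j τ (p.x τ) (p.u τ)) volume c d := fun j _ _ hc hd =>
    (intervalIntegrable_sub_rpow_s6 (by linarith [hv j]) tf _ _).mul_memLp_top
      (p.memLp_top_comp hU (hg j)) hc hd
  have ht : t ∈ Icc t tf := ⟨le_rfl, hs.1.trans hs.2⟩
  exact _root_.runningCost_add_adjacent (fun j => hcost j ht hs)
    (fun j => hcost j hs (right_mem_Icc.2 ht.2))

theorem x_start (p : AdmissiblePair tf U ftil t x0) (ht : t ≤ tf) : p.x t = x0 := by
  simpa using p.x_eq t ⟨le_rfl, ht⟩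

def restrict (p : AdmissiblePair tf U ftil t x0) (hU : IsCompact U)
    (hftil : Continuous fun z : ℝ × EuclideanSpace ℝ (Fin n) × EuclideanSpace ℝ (Fin m) =>
      ftil z.1 z.2.1 z.2.2)
    (hs : s ∈ Icc t tf) : AdmissiblePair tf U ftil s (p.x s) where
  x := p.x
  u := p.u
  u_mem τ hτ := p.u_mem τ ⟨hs.1.trans hτ.1, hτ.2⟩
  u_meas := p.u_meas.comp (measurable_inclusion (Icc_subset_Icc_left hs.1))
  x_cont := p.x_cont.mono (Icc_subset_Icc_left hs.1)
  x_eq τ hτ := by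
    have hτ' : τ ∈ Icc t tf := ⟨hs.1.trans hτ.1, hτ.2⟩
    rw [p.x_eq τ hτ', p.x_eq s hs, add_assoc, intervalIntegral.integral_add_adjacent_intervals
      (p.intervalIntegrable_dynamics hU hftil (left_mem_Icc.2 (hs.1.trans hs.2)) hs)
      (p.intervalIntegrable_dynamics hU hftil hs hτ')]

section Concat

variable (p : AdmissiblePair tf U ftil t x0) (q : AdmissiblePair tf U ftil s (p.x s))

/-- Continuous by construction; it follows `p.x` up to `s` and `q.x` after `s` because `q`
starts at `p.x s`. -/
def concatX : ℝ → EuclideanSpace ℝ (Fin n) := fun τ => p.x (min τ s) + q.x (max τ s) - p.x s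

/-- Clamping the argument of `q.u` into `[s, t_f]` makes measurability on `[t, t_f]` immediate;
it changes nothing on `(s, t_f]`. -/
def concatU (hs : s ≤ tf) : ℝ → EuclideanSpace ℝ (Fin m) :=
  fun τ => if τ ≤ s then p.u τ else q.u (projIcc s tf hs τ)

variable {p q}

theorem concatX_of_le (hs : s ≤ tf) {τ : ℝ} (hτ : τ ≤ s) : concatX p q τ = p.x τ := by
  rw [concatX, min_eq_left hτ, max_eq_right hτ, q.x_start hs, add_sub_cancel_right]

theorem concatX_of_ge {τ : ℝ} (hτ : s ≤ τ) : concatX p q τ = q.x τ := by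
  rw [concatX, min_eq_right hτ, max_eq_left hτ, add_sub_cancel_left]

theorem concatU_of_le (hs : s ≤ tf) {τ : ℝ} (hτ : τ ≤ s) : concatU p q hs τ = p.u τ :=
  if_pos hτ

theorem concatU_of_mem_Ioc (hs : s ≤ tf) {τ : ℝ} (hτ : τ ∈ Ioc s tf) :
    concatU p q hs τ = q.u τ := by
  rw [concatU, if_neg (not_le.2 hτ.1), projIcc_of_mem hs (Ioc_subset_Icc_self hτ)]

theorem continuousOn_concatX (hs : s ∈ Icc t tf) : ContinuousOn (concatX p q) (Icc t tf) :=
  ((p.x_cont.comp (continuous_id.min continuous_const).continuousOn fun _ hτ =>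
      ⟨le_min hτ.1 hs.1, min_le_of_left_le hτ.2⟩).add
    (q.x_cont.comp (continuous_id.max continuous_const).continuousOn fun _ hτ =>
      ⟨le_max_right _ _, max_le hτ.2 hs.2⟩)).sub continuousOn_const

theorem concatU_mem (hs : s ∈ Icc t tf) : ∀ τ ∈ Icc t tf, concatU p q hs.2 τ ∈ U := by
  intro τ hτ
  by_cases hτs : τ ≤ s
  · exact (concatU_of_le hs.2 hτs).symm ▸ p.u_mem τ hτ
  · rw [concatU, if_neg hτs]
    exact q.u_mem _ (projIcc s tf hs.2 τ).2

theorem measurable_concatU (hs : s ∈ Icc t tf) :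
    Measurable ((Icc t tf).domRestrict (concatU p q hs.2)) :=
  Measurable.ite (measurableSet_le measurable_subtype_coe measurable_const) p.u_meas
    (q.u_meas.comp (continuous_projIcc.measurable.comp measurable_subtype_coe))

theorem concatX_eq (hU : IsCompact U)
    (hftil : Continuous fun z : ℝ × EuclideanSpace ℝ (Fin n) × EuclideanSpace ℝ (Fin m) =>
      ftil z.1 z.2.1 z.2.2)
    (hs : s ∈ Icc t tf) (τ : ℝ) (hτ : τ ∈ Icc t tf) :
    concatX p q τ = x0 + ∫ σ in t..τ, ftil σ (concatX p q σ) (concatU p q hs.2 σ) := by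
  have on_p : EqOn (fun σ => ftil σ (concatX p q σ) (concatU p q hs.2 σ))
      (fun σ => ftil σ (p.x σ) (p.u σ)) (Iic s) := fun σ hσ => by
    simp only [concatX_of_le hs.2 hσ, concatU_of_le hs.2 hσ]
  have on_q : EqOn (fun σ => ftil σ (concatX p q σ) (concatU p q hs.2 σ))
      (fun σ => ftil σ (q.x σ) (q.u σ)) (Ioc s tf) := fun σ hσ => by
    simp only [concatX_of_ge hσ.1.le, concatU_of_mem_Ioc hs.2 hσ]
  rcases le_or_gt τ s with hτs | hsτ
  · have hsub : uIoc t τ ⊆ Iic s := by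
      rw [uIoc_of_le hτ.1]
      exact fun σ hσ => hσ.2.trans hτs
    rw [concatX_of_le hs.2 hτs, p.x_eq τ hτ, intervalIntegral.integral_congr_uIoc (on_p.mono hsub)]
  · have hsub_p : uIoc t s ⊆ Iic s := by
      rw [uIoc_of_le hs.1]
      exact Ioc_subset_Iic_self
    have hsub_q : uIoc s τ ⊆ Ioc s tf := by
      rw [uIoc_of_le hsτ.le]
      exact Ioc_subset_Ioc_right hτ.2
    have hpI := p.intervalIntegrable_dynamics hU hftil (left_mem_Icc.2 (hs.1.trans hs.2)) hs
    have hqI := q.intervalIntegrable_dynamics hU hftil ⟨le_rfl, hs.2⟩ ⟨hsτ.le, hτ.2⟩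
    rw [concatX_of_ge hsτ.le, q.x_eq τ ⟨hsτ.le, hτ.2⟩,
      ← intervalIntegral.integral_add_adjacent_intervals
        ((intervalIntegrable_congr (on_p.mono hsub_p)).2 hpI)
        ((intervalIntegrable_congr (on_q.mono hsub_q)).2 hqI),
      intervalIntegral.integral_congr_uIoc (on_p.mono hsub_p),
      intervalIntegral.integral_congr_uIoc (on_q.mono hsub_q), ← add_assoc, ← p.x_eq s hs]

variable (p q) in
def concat (hU : IsCompact U)
    (hftil : Continuous fun z : ℝ × EuclideanSpace ℝ (Fin n) × EuclideanSpace ℝ (Fin m) =>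
      ftil z.1 z.2.1 z.2.2)
    (hs : s ∈ Icc t tf) : AdmissiblePair tf U ftil t x0 where
  x := concatX p q
  u := concatU p q hs.2
  u_mem := concatU_mem hs
  u_meas := measurable_concatU hs
  x_cont := continuousOn_concatX hs
  x_eq := concatX_eq hU hftil hs

end Concat

theorem fracCost_eq_runningCost_add_fracCost_restrict (p : AdmissiblePair tf U ftil t x0)
    (hU : IsCompact U)
    (hftil : Continuous fun z : ℝ × EuclideanSpace ℝ (Fin n) × EuclideanSpace ℝ (Fin m) =>
      ftil z.1 z.2.1 z.2.2)
    (hv : ∀ j, 0 < v j)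
    (hg : ∀ j, Continuous fun z : ℝ × EuclideanSpace ℝ (Fin n) × EuclideanSpace ℝ (Fin m) =>
      g j z.1 z.2.1 z.2.2)
    (h : EuclideanSpace ℝ (Fin n) → ℝ) (hs : s ∈ Icc t tf) :
    fracCost tf v g h p =
      runningCost tf v g p.x p.u t s + fracCost tf v g h (p.restrict hU hftil hs) := by
  rw [fracCost_eq_runningCost_add, ← p.runningCost_add_adjacent hU hv hg hs, add_assoc]
  rfl

theorem fracCost_concat (p : AdmissiblePair tf U ftil t x0)
    (q : AdmissiblePair tf U ftil s (p.x s)) (hU : IsCompact U)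
    (hftil : Continuous fun z : ℝ × EuclideanSpace ℝ (Fin n) × EuclideanSpace ℝ (Fin m) =>
      ftil z.1 z.2.1 z.2.2)
    (hv : ∀ j, 0 < v j)
    (hg : ∀ j, Continuous fun z : ℝ × EuclideanSpace ℝ (Fin n) × EuclideanSpace ℝ (Fin m) =>
      g j z.1 z.2.1 z.2.2)
    (h : EuclideanSpace ℝ (Fin n) → ℝ) (hs : s ∈ Icc t tf) :
    fracCost tf v g h (p.concat q hU hftil hs) =
      runningCost tf v g p.x p.u t s + fracCost tf v g h q := by
  have hsub_p : uIoc t s ⊆ Iic s := by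
    rw [uIoc_of_le hs.1]
    exact Ioc_subset_Iic_self
  have hsub_q : uIoc s tf = Ioc s tf := uIoc_of_le hs.2
  have cost_p : runningCost tf v g (p.concat q hU hftil hs).x (p.concat q hU hftil hs).u t s =
      runningCost tf v g p.x p.u t s :=
    runningCost_congr (fun σ hσ => concatX_of_le hs.2 (hsub_p hσ))
      (fun σ hσ => concatU_of_le hs.2 (hsub_p hσ))
  have cost_q : runningCost tf v g (p.concat q hU hftil hs).x (p.concat q hU hftil hs).u s tf =
      runningCost tf v g q.x q.u s tf :=
    runningCost_congr (fun σ hσ => concatX_of_ge (hsub_q ▸ hσ).1.le)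
      (fun σ hσ => concatU_of_mem_Ioc hs.2 (hsub_q ▸ hσ))
  have hx_tf : (p.concat q hU hftil hs).x tf = q.x tf := concatX_of_ge hs.2
  rw [fracCost_eq_runningCost_add, fracCost_eq_runningCost_add,
    ← (p.concat q hU hftil hs).runningCost_add_adjacent hU hv hg hs, cost_p, cost_q, hx_tf,
    add_assoc]

end AdmissiblePair

theorem fracValue_principle_of_optimality_general
    (tf : ℝ) (n m : ℕ)
    (U : Set (EuclideanSpace ℝ (Fin m))) (hUc : IsCompact U)
    (ftil : ℝ → EuclideanSpace ℝ (Fin n) → EuclideanSpace ℝ (Fin m) →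
      EuclideanSpace ℝ (Fin n))
    (hftil : Continuous fun p : ℝ × EuclideanSpace ℝ (Fin n) × EuclideanSpace ℝ (Fin m) =>
      ftil p.1 p.2.1 p.2.2)
    (r : ℕ) (v : Fin r → ℝ) (hv : ∀ j, 0 < v j)
    (g : Fin r → ℝ → EuclideanSpace ℝ (Fin n) → EuclideanSpace ℝ (Fin m) → ℝ)
    (hg : ∀ j, Continuous fun p : ℝ × EuclideanSpace ℝ (Fin n) × EuclideanSpace ℝ (Fin m) =>
      g j p.1 p.2.1 p.2.2)
    (h : EuclideanSpace ℝ (Fin n) → ℝ)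
    (t : ℝ) (s : ℝ) (hs : s ∈ Set.Icc t tf)
    (x0 : EuclideanSpace ℝ (Fin n)) :
    fracValue tf U ftil v g h t x0 =
      ⨅ p : AdmissiblePair tf U ftil t x0,
        (((∑ j, (1 / Real.Gamma (v j)) *
              ∫ τ in t..s, (tf - τ) ^ (v j - 1) * g j τ (p.x τ) (p.u τ) : ℝ) : EReal)
          + fracValue tf U ftil v g h s (p.x s)) := by
  unfold fracValue
  refine le_antisymm (le_iInf fun p => ?_) (le_iInf fun p => ?_)
  · rw [EReal.coe_add_iInf]
    refine le_iInf fun q => (iInf_le _ (p.concat q hUc hftil hs)).trans_eq ?_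
    rw [p.fracCost_concat q hUc hftil hv hg h hs]
    exact EReal.coe_add _ _
  · refine (iInf_le _ p).trans ?_
    rw [p.fracCost_eq_runningCost_add_fracCost_restrict hUc hftil hv hg h hs, EReal.coe_add]
    exact add_le_add le_rfl (iInf_le _ _)

/-- **Bellman's principle of optimality** for the generalized fractional-order
performance index: for `t ∈ [t₀, t_f]`, `s ∈ [t, t_f]` and any initial state `x₀`,
the value function satisfies
`V(t, x₀) = inf over admissible pairs (x, u) from (t, x₀) of
  [ Σ_j (1/Γ(v_j)) ∫_t^s (t_f - τ)^(v_j-1) g_j(τ, x(τ), u(τ)) dτ + V(s, x(s)) ]`,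
both infima taken in the extended reals. -/
theorem fracValue_principle_of_optimality
    (t0 tf : ℝ) (ht0f : t0 < tf) (n m : ℕ)
    (U : Set (EuclideanSpace ℝ (Fin m))) (hUc : IsCompact U) (hUne : U.Nonempty)
    (ftil : ℝ → EuclideanSpace ℝ (Fin n) → EuclideanSpace ℝ (Fin m) →
      EuclideanSpace ℝ (Fin n))
    (hftil : Continuous fun p : ℝ × EuclideanSpace ℝ (Fin n) × EuclideanSpace ℝ (Fin m) =>
      ftil p.1 p.2.1 p.2.2)
    (r : ℕ) (hr : 1 ≤ r) (v : Fin r → ℝ) (hv : ∀ j, 0 < v j)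
    (g : Fin r → ℝ → EuclideanSpace ℝ (Fin n) → EuclideanSpace ℝ (Fin m) → ℝ)
    (hg : ∀ j, Continuous fun p : ℝ × EuclideanSpace ℝ (Fin n) × EuclideanSpace ℝ (Fin m) =>
      g j p.1 p.2.1 p.2.2)
    (h : EuclideanSpace ℝ (Fin n) → ℝ) (hh : Continuous h)
    (t : ℝ) (ht : t ∈ Set.Icc t0 tf) (s : ℝ) (hs : s ∈ Set.Icc t tf)
    (x0 : EuclideanSpace ℝ (Fin n)) :
    fracValue tf U ftil v g h t x0 =
      ⨅ p : AdmissiblePair tf U ftil t x0,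
        (((∑ j, (1 / Real.Gamma (v j)) *
              ∫ τ in t..s, (tf - τ) ^ (v j - 1) * g j τ (p.x τ) (p.u τ) : ℝ) : EReal)
          + fracValue tf U ftil v g h s (p.x s)) :=
  fracValue_principle_of_optimality_general tf n m U hUc ftil hftil r v hv g hg h t s hs x0
end
end
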